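/- arXiv:2407.14169 — 5 statements merged into one kernel-verified Lean document; each statement's English description precedes it below -/
import Mathlib

section
/- Let E be a normed space, p ≥ 1, and x : [a,b] → E a map of bounded p-variation (i.e., the supremum over all finite partitions a = t₀ < t₁ < ... < tₙ = b of ∑ᵢ ‖x(tᵢ) - x(tᵢ₋₁)‖^p is finite). Then the range x([a,b]) is precompact (totally bounded) in E, i.e., every sequence of points in the range has a Cauchy subsequence. -/
open scoped ENNReal NNReal

/-- The Wiener `p`-variation of a map `x : ℝ → E` over the interval `[a,b]`:
the supremum over all finite partitions `a = t₀ < t₁ < … < tₙ = b` of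
`∑ᵢ ‖x(tᵢ) - x(tᵢ₋₁)‖ ^ p`. -/
noncomputable def pVar {E : Type*} [NormedAddCommGroup E] (p a b : ℝ) (x : ℝ → E) : ℝ≥0∞ :=
  ⨆ (n : ℕ) (t : Fin (n + 1) → ℝ) (_ : StrictMono t) (_ : t 0 = a)
    (_ : t (Fin.last n) = b),
    ∑ i : Fin n, (‖x (t i.succ) - x (t i.castSucc)‖₊ : ℝ≥0∞) ^ p

/-!
If the range is not totally bounded, infinitely many parameters in `[a,b]` have pairwise
`ε`-separated images. Sorting any `n + 1` of them that lie in `(a,b)` and adding the endpoints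
gives a partition whose `n` inner increments all have norm `≥ ε`, so the `p`-variation is at least
`n ε ^ p` for every `n`.
-/

theorem exists_infinite_pairwise_le_dist_of_not_totallyBounded {α Y : Type*}
    [PseudoMetricSpace Y] {f : α → Y} {s : Set α} (h : ¬TotallyBounded (f '' s)) :
    ∃ ε > 0, ∃ S ⊆ s, S.Infinite ∧ S.Pairwise fun u v ↦ ε ≤ dist (f u) (f v) := by
  rw [Metric.totallyBounded_iff] at h
  push Not at h
  obtain ⟨ε, hε, hcover⟩ := h
  have hnext : ∀ t : Set α, t.Finite → ∃ c, c ∈ s ∧ ∀ v ∈ t, ε ≤ dist (f c) (f v) := by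
    intro t ht
    obtain ⟨_, ⟨c, hc, rfl⟩, hcov⟩ := Set.not_subset.1 (hcover _ (ht.image f))
    simp only [Set.mem_iUnion, Metric.mem_ball, Set.mem_image, exists_prop] at hcov
    exact ⟨c, hc, fun v hv ↦ not_lt.1 fun hlt ↦ hcov ⟨_, ⟨v, hv, rfl⟩, hlt⟩⟩
  obtain ⟨u, hu⟩ := Set.seq_of_forall_finite_exists hnext
  have hsep : ∀ m n, m < n → ε ≤ dist (f (u n)) (f (u m)) := fun m n hmn ↦
    (hu n).2 _ ⟨m, hmn, rfl⟩
  have hinj : Function.Injective u := .of_lt_imp_ne fun m n hmn heq ↦ by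
    have := hsep m n hmn
    rw [heq, dist_self] at this
    exact this.not_gt hε
  refine ⟨ε, hε, Set.range u, Set.range_subset_iff.2 fun n ↦ (hu n).1,
    Set.infinite_range_of_injective hinj, ?_⟩
  rintro _ ⟨m, rfl⟩ _ ⟨n, rfl⟩ hne
  rcases lt_or_gt_of_ne (hinj.ne_iff.1 hne) with hmn | hmn
  · exact dist_comm (f (u m)) _ ▸ hsep m n hmn
  · exact hsep n m hmn

section pVarSum

variable {E : Type*} [SeminormedAddCommGroup E]

noncomputable def pVarSum (p : ℝ) (x : ℝ → E) {n : ℕ} (t : Fin (n + 1) → ℝ) : ℝ≥0∞ :=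
  ∑ i : Fin n, (‖x (t i.succ) - x (t i.castSucc)‖₊ : ℝ≥0∞) ^ p

variable {p : ℝ} {x : ℝ → E} {n : ℕ}

theorem pVarSum_le_pVarSum_cons (t : Fin (n + 1) → ℝ) (a : ℝ) :
    pVarSum p x t ≤ pVarSum p x (Fin.cons a t : Fin (n + 2) → ℝ) := by
  rw [pVarSum, pVarSum, Fin.sum_univ_succ]
  simp only [Fin.cons_succ, ← Fin.succ_castSucc]
  exact le_add_self

theorem pVarSum_le_pVarSum_snoc (t : Fin (n + 1) → ℝ) (b : ℝ) :
    pVarSum p x t ≤ pVarSum p x (Fin.snoc t b : Fin (n + 2) → ℝ) := by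
  rw [pVarSum, pVarSum, Fin.sum_univ_castSucc]
  simp only [Fin.snoc_castSucc, Fin.succ_castSucc]
  exact le_self_add

theorem natCast_mul_le_pVarSum (hp : 0 ≤ p) {ε : ℝ} {t : Fin (n + 1) → ℝ}
    (hsep : ∀ i : Fin n, ε ≤ ‖x (t i.succ) - x (t i.castSucc)‖) :
    n * ENNReal.ofReal ε ^ p ≤ pVarSum p x t := by
  have hterm : ∀ i : Fin n,
      ENNReal.ofReal ε ^ p ≤ (‖x (t i.succ) - x (t i.castSucc)‖₊ : ℝ≥0∞) ^ p := fun i ↦ by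
    gcongr
    simpa [← ofReal_norm] using ENNReal.ofReal_le_ofReal (hsep i)
  simpa [pVarSum] using Finset.card_nsmul_le_sum Finset.univ _ _ fun i _ ↦ hterm i

end pVarSum

theorem StrictMono.fin_snoc {α : Type*} [Preorder α] {n : ℕ} {t : Fin (n + 1) → α}
    (ht : StrictMono t) {b : α} (hb : t (Fin.last n) < b) :
    StrictMono (Fin.snoc t b : Fin (n + 2) → α) := by
  refine Fin.strictMono_iff_lt_succ.2 fun i ↦ ?_
  induction i using Fin.lastCases with
  | last => simpa using hb
  | cast j => simpa only [Fin.snoc_castSucc, Fin.succ_castSucc] using ht j.castSucc_lt_succ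

section pVar

variable {E : Type*} [NormedAddCommGroup E] {p a b : ℝ} {x : ℝ → E} {n : ℕ}

theorem pVarSum_le_pVar {t : Fin (n + 1) → ℝ} (ht : StrictMono t) (h0 : t 0 = a)
    (hlast : t (Fin.last n) = b) : pVarSum p x t ≤ pVar p a b x :=
  le_iSup_of_le n <| le_iSup_of_le t <| le_iSup_of_le ht <| le_iSup_of_le h0 <|
    le_iSup_of_le hlast le_rfl

theorem pVarSum_le_pVar_of_mem_Ioo {t : Fin (n + 1) → ℝ} (ht : StrictMono t)
    (hmem : ∀ i, t i ∈ Set.Ioo a b) : pVarSum p x t ≤ pVar p a b x := by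
  have hsnoc : StrictMono (Fin.snoc t b : Fin (n + 2) → ℝ) := ht.fin_snoc (hmem _).2
  have hcons : StrictMono (Fin.cons a (Fin.snoc t b) : Fin (n + 3) → ℝ) := by
    refine Fin.strictMono_cons.2 ⟨fun j ↦ ?_, hsnoc⟩
    induction j using Fin.lastCases with
    | last => simpa using (hmem 0).1.trans (hmem 0).2
    | cast j => simpa using (hmem j).1
  calc pVarSum p x t ≤ pVarSum p x (Fin.snoc t b : Fin (n + 2) → ℝ) := pVarSum_le_pVarSum_snoc t b
    _ ≤ pVarSum p x (Fin.cons a (Fin.snoc t b) : Fin (n + 3) → ℝ) := pVarSum_le_pVarSum_cons _ a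
    _ ≤ pVar p a b x :=
      pVarSum_le_pVar hcons rfl (by rw [← Fin.succ_last, Fin.cons_succ, Fin.snoc_last])

theorem natCast_mul_le_pVar_of_pairwise (hp : 0 ≤ p) {ε : ℝ} {S : Set ℝ}
    (hSab : S ⊆ Set.Icc a b) (hS : S.Infinite) (hsep : S.Pairwise fun u v ↦ ε ≤ dist (x u) (x v))
    (n : ℕ) : n * ENNReal.ofReal ε ^ p ≤ pVar p a b x := by
  obtain ⟨F, hFS, hF⟩ := (hS.sdiff (Set.toFinite {a, b})).exists_subset_card_eq (n + 1)
  set t := F.orderEmbOfFin hF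
  have htS : ∀ i, t i ∈ S \ {a, b} := fun i ↦ hFS (F.orderEmbOfFin_mem hF i)
  have htIoo : ∀ i, t i ∈ Set.Ioo a b := fun i ↦ by
    obtain ⟨hS, hab⟩ := htS i
    simp only [Set.mem_insert_iff, Set.mem_singleton_iff, not_or] at hab
    exact ⟨(hSab hS).1.lt_of_ne' hab.1, (hSab hS).2.lt_of_ne hab.2⟩
  calc n * ENNReal.ofReal ε ^ p ≤ pVarSum p x t := natCast_mul_le_pVarSum hp fun i ↦ by
        rw [← dist_eq_norm]
        exact hsep (htS _).1 (htS _).1 (t.strictMono i.castSucc_lt_succ).ne'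
    _ ≤ pVar p a b x := pVarSum_le_pVar_of_mem_Ioo t.strictMono htIoo

end pVar

/-- Maps of bounded `p`-variation (`p ≥ 1`) have precompact (totally bounded) range. -/
theorem pVar_totallyBounded_range {E : Type*} [NormedAddCommGroup E]
    (p a b : ℝ) (hp : 1 ≤ p) (x : ℝ → E) (hx : pVar p a b x ≠ ⊤) :
    TotallyBounded (x '' Set.Icc a b) := by
  by_contra hx'
  obtain ⟨ε, hε, S, hSab, hS, hsep⟩ := exists_infinite_pairwise_le_dist_of_not_totallyBounded hx'
  have hεp : ENNReal.ofReal ε ^ p ≠ 0 :=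
    (ENNReal.rpow_pos (ENNReal.ofReal_pos.2 hε) ENNReal.ofReal_ne_top).ne'
  obtain ⟨n, hn⟩ := ENNReal.exists_nat_mul_gt hεp hx
  exact (natCast_mul_le_pVar_of_pairwise (by linarith) hSab hS hsep n).not_gt hn
end

section
/- Let E be a normed space, 1 ≤ p ≤ q < ∞, and let f : E → E be Hölder continuous with exponent p/q on precompact subsets of E (i.e., for each precompact K ⊆ E there exists L_K ≥ 0 such that ‖f(u)-f(w)‖ ≤ L_K ‖u-w‖^{p/q} for u,w ∈ K). Then for every x ∈ BV_p([a,b],E), the composition f ∘ x belongs to BV_q([a,b],E), and moreover var_q(f∘x) ≤ L_K^q · var_p(x) where K = x([a,b]). -/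
open scoped ENNReal NNReal

/-!
A Hölder bound with exponent `p/q` turns, after raising to the power `q`, into the pointwise
comparison `‖f u - f w‖^q ≤ L^q ‖u - w‖^p`; summing it over the increments of a partition
compares the `q`-variation sums of `f ∘ x` with `L^q` times the `p`-variation sums of `x`.
-/

section

variable {E F : Type*} [NormedAddCommGroup E] [NormedAddCommGroup F]

theorem sum_le_pVar (p a b : ℝ) (x : ℝ → E) {n : ℕ} {t : Fin (n + 1) → ℝ}
    (ht : StrictMono t) (h0 : t 0 = a) (hn : t (Fin.last n) = b) :
    ∑ i : Fin n, (‖x (t i.succ) - x (t i.castSucc)‖₊ : ℝ≥0∞) ^ p ≤ pVar p a b x :=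
  le_iSup_of_le n <| le_iSup_of_le t <| le_iSup_of_le ht <| le_iSup_of_le h0 <|
    le_iSup_of_le hn le_rfl

theorem pVar_le_mul_pVar {p q a b : ℝ} {x : ℝ → E} {y : ℝ → F} {C : ℝ≥0∞}
    (h : ∀ s ∈ Set.Icc a b, ∀ t ∈ Set.Icc a b,
      (‖y s - y t‖₊ : ℝ≥0∞) ^ q ≤ C * (‖x s - x t‖₊ : ℝ≥0∞) ^ p) :
    pVar q a b y ≤ C * pVar p a b x := by
  refine iSup_le fun n => iSup_le fun t => iSup_le fun ht => iSup_le fun h0 =>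
    iSup_le fun hn => ?_
  have ht_mem (i : Fin (n + 1)) : t i ∈ Set.Icc a b :=
    ⟨h0 ▸ ht.monotone (Fin.zero_le i), hn ▸ ht.monotone (Fin.le_last i)⟩
  calc ∑ i : Fin n, (‖y (t i.succ) - y (t i.castSucc)‖₊ : ℝ≥0∞) ^ q
      ≤ ∑ i : Fin n, C * (‖x (t i.succ) - x (t i.castSucc)‖₊ : ℝ≥0∞) ^ p :=
        Finset.sum_le_sum fun i _ => h _ (ht_mem _) _ (ht_mem _)
    _ = C * ∑ i : Fin n, (‖x (t i.succ) - x (t i.castSucc)‖₊ : ℝ≥0∞) ^ p :=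
        (Finset.mul_sum _ _ _).symm
    _ ≤ C * pVar p a b x := by gcongr; exact sum_le_pVar p a b x ht h0 hn

theorem nnnorm_rpow_le_of_le_mul_rpow_div {p q L : ℝ} (hp : 0 ≤ p) (hq : 0 < q) (hL : 0 ≤ L)
    {v : F} {u : E} (h : ‖v‖ ≤ L * ‖u‖ ^ (p / q)) :
    (‖v‖₊ : ℝ≥0∞) ^ q ≤ ENNReal.ofReal (L ^ q) * (‖u‖₊ : ℝ≥0∞) ^ p := by
  have hreal : ‖v‖ ^ q ≤ L ^ q * ‖u‖ ^ p :=
    calc ‖v‖ ^ q ≤ (L * ‖u‖ ^ (p / q)) ^ q := by gcongr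
      _ = L ^ q * (‖u‖ ^ (p / q)) ^ q := Real.mul_rpow hL (by positivity)
      _ = L ^ q * ‖u‖ ^ p := by
        rw [← Real.rpow_mul (norm_nonneg _), div_mul_cancel₀ p hq.ne']
  rw [← enorm_eq_nnnorm, ← enorm_eq_nnnorm, ← ofReal_norm, ← ofReal_norm,
    ENNReal.ofReal_rpow_of_nonneg (norm_nonneg _) hq.le,
    ENNReal.ofReal_rpow_of_nonneg (norm_nonneg _) hp, ← ENNReal.ofReal_mul (by positivity)]
  exact ENNReal.ofReal_le_ofReal hreal

end

/-- Sufficiency in the Josephy-type theorem: if `f` is Hölder continuous with exponent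
`p/q` on the (precompact) range `K = x([a,b])` with constant `L`, then
`var_q (f ∘ x) ≤ L^q · var_p x`; in particular `f ∘ x` has bounded `q`-variation. -/
theorem pVar_comp_of_holder {E : Type*} [NormedAddCommGroup E]
    (p q a b : ℝ) (hp : 1 ≤ p) (hpq : p ≤ q)
    (f : E → E) (x : ℝ → E) (hx : pVar p a b x ≠ ⊤)
    (L : ℝ) (hL : 0 ≤ L)
    (hf : ∀ u ∈ x '' Set.Icc a b, ∀ w ∈ x '' Set.Icc a b,
      ‖f u - f w‖ ≤ L * ‖u - w‖ ^ (p / q)) :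
    pVar q a b (fun t => f (x t)) ≤ ENNReal.ofReal (L ^ q) * pVar p a b x ∧
      pVar q a b (fun t => f (x t)) ≠ ⊤ := by
  have hq : 0 < q := by linarith
  have hvar : pVar q a b (fun t => f (x t)) ≤ ENNReal.ofReal (L ^ q) * pVar p a b x :=
    pVar_le_mul_pVar fun s hs t ht => nnnorm_rpow_le_of_le_mul_rpow_div (by linarith) hq hL <|
      hf _ (Set.mem_image_of_mem x hs) _ (Set.mem_image_of_mem x ht)
  exact ⟨hvar, ne_top_of_le_ne_top (ENNReal.mul_ne_top ENNReal.ofReal_ne_top hx) hvar⟩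
end

section
/- The map x : [0,1] → c₀₀(ℝ) (finitely supported real sequences with sup norm) given by x(t) = (1, 1/2², ..., 1/k², 0, 0, ...) for t ∈ [1 - 1/k, 1 - 1/(k+1)) and x(1) = 0 has bounded 1-variation, but its range is not relatively compact in c₀₀(ℝ). -/
open scoped ENNReal NNReal

/-- `c₀₀(ℝ)`: the space of finitely supported real sequences, as a subspace of `ℓ∞`,
so that it carries the supremum norm. -/
noncomputable def c00 : Submodule ℝ (lp (fun _ : ℕ => ℝ) ⊤) where
  carrier := {f | (Function.support (⇑f)).Finite}
  add_mem' := by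
    intro f g hf hg
    refine (hf.union hg).subset ?_
    intro i hi
    simp only [Function.mem_support, lp.coeFn_add, Pi.add_apply] at hi
    by_contra h
    simp only [Set.mem_union, Function.mem_support, not_or, not_not] at h
    exact hi (by rw [h.1, h.2]; ring)
  zero_mem' := by simp [Function.support]
  smul_mem' := by
    intro c f hf
    refine hf.subset ?_
    intro i hi
    simp only [Function.mem_support, lp.coeFn_smul, Pi.smul_apply, smul_eq_mul] at hi
    simp only [Function.mem_support]
    intro h
    exact hi (by rw [h, mul_zero])

/-- The finitely supported sequence `(1, 1/2², …, 1/k², 0, 0, …)` as an element of `c₀₀(ℝ)`. -/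
noncomputable def c00elem (k : ℕ) : c00 :=
  ⟨⟨fun i => if i < k then 1 / ((i : ℝ) + 1) ^ 2 else 0, by
      apply memℓp_infty
      refine ⟨1, ?_⟩
      rintro y ⟨i, rfl⟩
      dsimp
      split_ifs with h
      · rw [abs_of_nonneg (by positivity)]
        rw [div_le_one (by positivity)]
        nlinarith [Nat.cast_nonneg (α := ℝ) i]
      · simp⟩, by
    refine Set.Finite.subset (Finset.range k).finite_toSet ?_
    intro i hi
    simp only [Function.mem_support] at hi
    simp only [Finset.coe_range, Set.mem_Iio]
    by_contra h
    push_neg at h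
    exact hi (by simp [Nat.not_lt.mpr h, if_neg])⟩

/-- The step map `x : [0,1] → c₀₀(ℝ)` equal to `(1, 1/2², …, 1/k², 0, …)` on
`[1 - 1/k, 1 - 1/(k+1))` for `k ∈ ℕ`, and `x 1 = 0`. -/
noncomputable def c00map (t : ℝ) : c00 :=
  if t < 1 then c00elem ⌊1 / (1 - t)⌋₊ else 0

/-!
Passing from the `k`-th to the `m`-th step of `x = c00map` changes it by at most
`∑_{k ≤ j < m} 1/(j+1)²` in the sup norm, so `‖x t - x s‖ ≤ F t - F s` for the nondecreasing
bounded function `F t = ∑_{j < ⌊1/(1-t)⌋} 1/(j+1)²` (with a jump at `t = 1`); telescoping over a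
partition bounds the `1`-variation by `F 1 - F 0`. The values `x (1 - 1/k) = c00elem k` converge
coordinatewise to `(1/(i+1)²)ᵢ`, which is not finitely supported, so no subsequence of them
converges in `c₀₀(ℝ)`.
-/

open Filter Topology

theorem Fin.sum_succ_sub_castSucc {G : Type*} [AddCommGroup G] {n : ℕ} (f : Fin (n + 1) → G) :
    ∑ i : Fin n, (f i.succ - f i.castSucc) = f (Fin.last n) - f 0 := by
  induction n with
  | zero => simp
  | succ n ih =>
    rw [Fin.sum_univ_castSucc]
    simp only [Fin.succ_castSucc]
    rw [ih fun j => f j.castSucc]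
    simp only [Fin.succ_last, Fin.castSucc_zero]
    abel

theorem pVar_one_le_of_norm_sub_le {E : Type*} [NormedAddCommGroup E] {a b : ℝ} {x : ℝ → E}
    {F : ℝ → ℝ} (hF : ∀ s t, a ≤ s → s < t → t ≤ b → ‖x t - x s‖ ≤ F t - F s) :
    pVar 1 a b x ≤ ENNReal.ofReal (F b - F a) := by
  refine iSup_le fun n => iSup_le fun t => iSup_le fun ht => iSup_le fun ht0 =>
    iSup_le fun htn => ?_
  have hmem : ∀ i, a ≤ t i ∧ t i ≤ b := fun i =>
    ⟨ht0 ▸ ht.monotone (Fin.zero_le i), htn ▸ ht.monotone (Fin.le_last i)⟩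
  calc ∑ i : Fin n, (‖x (t i.succ) - x (t i.castSucc)‖₊ : ℝ≥0∞) ^ (1 : ℝ)
      = ENNReal.ofReal (∑ i : Fin n, ‖x (t i.succ) - x (t i.castSucc)‖) := by
        rw [ENNReal.ofReal_sum_of_nonneg fun i _ => norm_nonneg _]
        simp [ofReal_norm, enorm_eq_nnnorm]
    _ ≤ ENNReal.ofReal (∑ i : Fin n, (F (t i.succ) - F (t i.castSucc))) :=
        ENNReal.ofReal_le_ofReal <| Finset.sum_le_sum fun i _ =>
          hF _ _ (hmem _).1 (ht Fin.castSucc_lt_succ) (hmem _).2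
    _ = ENNReal.ofReal (F b - F a) := by
        rw [← htn, ← ht0]
        exact congrArg _ (Fin.sum_succ_sub_castSucc fun i => F (t i))

theorem c00elem_apply (k i : ℕ) :
    (c00elem k : lp (fun _ : ℕ => ℝ) ⊤) i = if i < k then 1 / ((i : ℝ) + 1) ^ 2 else 0 :=
  rfl

theorem c00elem_zero : c00elem 0 = 0 := by
  ext i
  simp [c00elem_apply]

noncomputable def partialSumInvSq (k : ℕ) : ℝ :=
  ∑ j ∈ Finset.range k, 1 / ((j : ℝ) + 1) ^ 2

theorem partialSumInvSq_le_tsum (k : ℕ) :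
    partialSumInvSq k ≤ ∑' j : ℕ, 1 / ((j : ℝ) + 1) ^ 2 := by
  have hsum : Summable fun j : ℕ => 1 / ((j : ℝ) + 1) ^ 2 := by
    simpa using (summable_nat_add_iff 1).2 (Real.summable_one_div_nat_pow.2 one_lt_two)
  exact hsum.sum_le_tsum _ fun j _ => by positivity

theorem norm_c00elem_sub_le {k m : ℕ} (hkm : k ≤ m) :
    ‖c00elem m - c00elem k‖ ≤ partialSumInvSq m - partialSumInvSq k := by
  have hdiff : partialSumInvSq m - partialSumInvSq k
      = ∑ j ∈ Finset.Ico k m, 1 / ((j : ℝ) + 1) ^ 2 :=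
    (Finset.sum_Ico_eq_sub _ hkm).symm
  have hdiff_nonneg : 0 ≤ ∑ j ∈ Finset.Ico k m, 1 / ((j : ℝ) + 1) ^ 2 :=
    Finset.sum_nonneg fun j _ => by positivity
  rw [hdiff]
  refine lp.norm_le_of_forall_le hdiff_nonneg fun i => ?_
  change ‖(c00elem m : lp (fun _ : ℕ => ℝ) ⊤) i - (c00elem k : lp (fun _ : ℕ => ℝ) ⊤) i‖ ≤ _
  rw [c00elem_apply, c00elem_apply]
  by_cases hik : i < k
  · rwa [if_pos hik, if_pos (hik.trans_le hkm), sub_self, norm_zero]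
  by_cases him : i < m
  · rw [if_pos him, if_neg hik, sub_zero, Real.norm_of_nonneg (by positivity)]
    exact Finset.single_le_sum (f := fun j : ℕ => 1 / ((j : ℝ) + 1) ^ 2)
      (fun j _ => by positivity) (Finset.mem_Ico.2 ⟨not_lt.1 hik, him⟩)
  · rwa [if_neg hik, if_neg him, sub_self, norm_zero]

/-- The jump at `t = 1` is at least `∑' j, 1/(j+1)²`, which bounds every `‖c00elem k‖`. -/
noncomputable def c00mapMajorant (t : ℝ) : ℝ :=
  if t < 1 then partialSumInvSq ⌊1 / (1 - t)⌋₊ else 2 * ∑' j : ℕ, 1 / ((j : ℝ) + 1) ^ 2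

theorem norm_c00map_sub_le {s t : ℝ} (hst : s < t) (ht : t ≤ 1) :
    ‖c00map t - c00map s‖ ≤ c00mapMajorant t - c00mapMajorant s := by
  have hs : s < 1 := hst.trans_le ht
  rw [c00map, c00map, c00mapMajorant, c00mapMajorant, if_pos hs, if_pos hs]
  by_cases ht1 : t < 1
  · rw [if_pos ht1, if_pos ht1]
    exact norm_c00elem_sub_le <| Nat.floor_mono <|
      one_div_le_one_div_of_le (sub_pos.2 ht1) (by linarith)
  · rw [if_neg ht1, if_neg ht1, zero_sub, norm_neg]
    set k := ⌊1 / (1 - s)⌋₊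
    have hnorm : ‖c00elem k‖ ≤ partialSumInvSq k := by
      simpa [c00elem_zero, partialSumInvSq] using norm_c00elem_sub_le (Nat.zero_le k)
    linarith [partialSumInvSq_le_tsum k]

theorem c00map_one_sub_inv {k : ℕ} (hk : 0 < k) : c00map (1 - (k : ℝ)⁻¹) = c00elem k := by
  rw [c00map, if_pos (sub_lt_self _ (by positivity)), sub_sub_cancel, one_div, inv_inv,
    Nat.floor_natCast]

theorem not_tendsto_c00elem {ι : Type*} {l : Filter ι} [l.NeBot] {k : ι → ℕ}
    (hk : Tendsto k l atTop) (a : c00) : ¬ Tendsto (fun j => c00elem (k j)) l (𝓝 a) := by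
  intro ha
  have hcoord : ∀ i : ℕ, (a : lp (fun _ : ℕ => ℝ) ⊤) i = 1 / ((i : ℝ) + 1) ^ 2 := fun i =>
    tendsto_nhds_unique
      (((lp.lipschitzWith_one_eval ⊤ i).continuous.tendsto _).comp
        ((continuous_subtype_val.tendsto a).comp ha))
      (tendsto_const_nhds.congr' <| (hk.eventually_gt_atTop i).mono fun j hj =>
        (if_pos hj).symm)
  have hsupp : Function.support (a : lp (fun _ : ℕ => ℝ) ⊤) = Set.univ :=
    Set.eq_univ_of_forall fun i => by simp only [Function.mem_support, hcoord]; positivity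
  have hfin : (Function.support (a : lp (fun _ : ℕ => ℝ) ⊤)).Finite := a.2
  rw [hsupp] at hfin
  exact Set.infinite_univ hfin

/-- The map `c00map` has bounded `1`-variation on `[0,1]`, but its range is not
relatively compact in `c₀₀(ℝ)`. -/
theorem c00map_bv_not_relatively_compact :
    pVar 1 0 1 c00map ≠ ⊤ ∧ ¬ IsCompact (closure (c00map '' Set.Icc 0 1)) := by
  refine ⟨ne_top_of_le_ne_top ENNReal.ofReal_ne_top
    (pVar_one_le_of_norm_sub_le fun _ _ _ hst ht => norm_c00map_sub_le hst ht), fun hK => ?_⟩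
  have hrange : ∀ n : ℕ, c00elem (n + 1) ∈ closure (c00map '' Set.Icc 0 1) := fun n =>
    subset_closure ⟨1 - ((n + 1 : ℕ) : ℝ)⁻¹,
      ⟨sub_nonneg.2 (Nat.cast_inv_le_one _), sub_le_self _ (by positivity)⟩,
      c00map_one_sub_inv n.succ_pos⟩
  obtain ⟨a, -, φ, hφ, hlim⟩ := hK.tendsto_subseq hrange
  exact not_tendsto_c00elem ((tendsto_add_atTop_nat 1).comp hφ.tendsto_atTop) a hlim
end

section
/- Let E be a normed space, 1 ≤ p ≤ q < ∞, and suppose the composition operator C_f generated by f : E → E maps BV_p([a,b],E) into BV_q([a,b],E) and has bounded range (i.e., sup_{x ∈ BV_p} ‖C_f(x)‖_q < ∞). Then f is constant. -/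
open scoped ENNReal NNReal

lemma Finset.sum_ite_mem_le_card_mul {ι α : Type*} [Fintype ι] [DecidableEq α] {g : ι → α}
    (hg : Function.Injective g) (S : Finset α) (c : ℝ≥0∞) :
    ∑ i, (if g i ∈ S then c else 0) ≤ S.card * c := by
  rw [← Finset.sum_filter, Finset.sum_const, nsmul_eq_mul]
  gcongr
  exact Finset.card_le_card_of_injOn g (fun i hi => (Finset.mem_filter.mp hi).2) hg.injOn

lemma ENNReal.eq_zero_of_forall_natCast_mul_le {c B : ℝ≥0∞} (hB : B ≠ ⊤)
    (h : ∀ N : ℕ, N * c ≤ B) : c = 0 := by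
  by_contra hc
  obtain ⟨N, hN⟩ := ENNReal.exists_nat_mul_gt hc hB
  exact (h N).not_gt hN

lemma ENNReal.le_ofReal_rpow_of_toReal_rpow_le {V : ℝ≥0∞} {q R : ℝ} (hq : 0 < q) (hV : V ≠ ⊤)
    (h : V.toReal ^ (1 / q) ≤ R) : V ≤ ENNReal.ofReal (R ^ q) := by
  have hR : 0 ≤ R := (Real.rpow_nonneg ENNReal.toReal_nonneg _).trans h
  rw [one_div, Real.rpow_inv_le_iff_of_pos ENNReal.toReal_nonneg hR hq] at h
  exact (ENNReal.le_ofReal_iff_toReal_le hV (Real.rpow_nonneg hR q)).mpr h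

lemma exists_strictMono_partition {a b : ℝ} (hab : a < b) {N : ℕ} (hN : N ≠ 0) :
    ∃ t : Fin (N + 1) → ℝ, StrictMono t ∧ t 0 = a ∧ t (Fin.last N) = b := by
  have hNpos : (0 : ℝ) < N := by positivity
  refine ⟨fun j => a + (j : ℕ) * ((b - a) / N), fun i j hij => ?_, by simp, ?_⟩
  · have hij' : ((i : ℕ) : ℝ) < (j : ℕ) := by exact_mod_cast hij
    have := mul_lt_mul_of_pos_right hij' (div_pos (sub_pos.mpr hab) hNpos)
    simpa using this
  · simp only [Fin.val_last]
    rw [mul_div_cancel₀ _ hNpos.ne']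
    ring

section SpikeFun

variable {α β : Type*} [DecidableEq α]

def spikeFun (S : Finset α) (u w : β) : α → β :=
  fun s => if s ∈ S then u else w

lemma spikeFun_apply_of_notMem {S : Finset α} {s : α} (hs : s ∉ S) (u w : β) :
    spikeFun S u w s = w :=
  if_neg hs

lemma comp_spikeFun {γ : Type*} (f : β → γ) (S : Finset α) (u w : β) :
    (fun s => f (spikeFun S u w s)) = spikeFun S (f u) (f w) :=
  funext fun _ => apply_ite f _ u w

lemma spikeFun_image_apply {ι : Type*} [Fintype ι] {t : ι → α} (ht : Function.Injective t)
    (P : ι → Prop) [DecidablePred P] (u w : β) (j : ι) :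
    spikeFun ((Finset.univ.filter P).image t) u w (t j) = if P j then u else w := by
  simp [spikeFun, ht.eq_iff]

lemma nnnorm_spikeFun_sub_rpow_le {E : Type*} [NormedAddCommGroup E] {p : ℝ} (hp : 0 < p)
    (S : Finset α) (u w : E) (s s' : α) :
    (‖spikeFun S u w s - spikeFun S u w s'‖₊ : ℝ≥0∞) ^ p ≤
      (if s ∈ S then (‖u - w‖₊ : ℝ≥0∞) ^ p else 0) +
        (if s' ∈ S then (‖u - w‖₊ : ℝ≥0∞) ^ p else 0) := by
  unfold spikeFun
  by_cases hs : s ∈ S <;> by_cases hs' : s' ∈ S <;>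
    simp [hs, hs', ENNReal.zero_rpow_of_pos hp, ← nnnorm_neg (w - u)]

end SpikeFun

section PVar

variable {E : Type*} [NormedAddCommGroup E]

lemma le_pVar {p a b : ℝ} (x : ℝ → E) {n : ℕ} {t : Fin (n + 1) → ℝ} (ht : StrictMono t)
    (h0 : t 0 = a) (hn : t (Fin.last n) = b) :
    ∑ i : Fin n, (‖x (t i.succ) - x (t i.castSucc)‖₊ : ℝ≥0∞) ^ p ≤ pVar p a b x :=
  le_iSup_of_le n <| le_iSup_of_le t <| le_iSup_of_le ht <| le_iSup_of_le h0 <|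
    le_iSup_of_le hn le_rfl

lemma pVar_spikeFun_le {p : ℝ} (hp : 0 < p) (a b : ℝ) (S : Finset ℝ) (u w : E) :
    pVar p a b (spikeFun S u w) ≤ S.card * (‖u - w‖₊ : ℝ≥0∞) ^ p +
      S.card * (‖u - w‖₊ : ℝ≥0∞) ^ p := by
  refine iSup_le fun n => iSup_le fun t => iSup_le fun ht => iSup_le fun _ => iSup_le fun _ => ?_
  calc _ ≤ ∑ i : Fin n, ((if t i.succ ∈ S then (‖u - w‖₊ : ℝ≥0∞) ^ p else 0) +
          (if t i.castSucc ∈ S then (‖u - w‖₊ : ℝ≥0∞) ^ p else 0)) :=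
        Finset.sum_le_sum fun i _ => nnnorm_spikeFun_sub_rpow_le hp S u w _ _
    _ = _ := Finset.sum_add_distrib
    _ ≤ _ := add_le_add
        (Finset.sum_ite_mem_le_card_mul (ht.injective.comp (Fin.succ_injective n)) S _)
        (Finset.sum_ite_mem_le_card_mul (ht.injective.comp (Fin.castSucc_injective n)) S _)

lemma pVar_spikeFun_ne_top {p : ℝ} (hp : 0 < p) (a b : ℝ) (S : Finset ℝ) (u w : E) :
    pVar p a b (spikeFun S u w) ≠ ⊤ :=
  ne_top_of_le_ne_top (by finiteness) (pVar_spikeFun_le hp a b S u w)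

/-- The spikes sit at the odd-indexed points of a partition into `N` intervals, so every
increment along that partition is `±(u - w)`. -/
lemma exists_spikeFun_natCast_mul_le_pVar (q : ℝ) {a b : ℝ} (hab : a < b) (N : ℕ) (u w : E) :
    ∃ S : Finset ℝ, a ∉ S ∧
      N * (‖u - w‖₊ : ℝ≥0∞) ^ q ≤ pVar q a b (spikeFun S u w) := by
  rcases eq_or_ne N 0 with rfl | hN
  · exact ⟨∅, Finset.notMem_empty a, by simp⟩
  obtain ⟨t, ht, h0, hlast⟩ := exists_strictMono_partition hab hN
  have hval := spikeFun_image_apply ht.injective (fun j : Fin (N + 1) => Odd (j : ℕ)) u w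
  refine ⟨(Finset.univ.filter fun j : Fin (N + 1) => Odd (j : ℕ)).image t, ?_, ?_⟩
  · simp [← h0, ht.injective.eq_iff]
  · have hterm : ∀ i : Fin N, (‖spikeFun _ u w (t i.succ) - spikeFun _ u w (t i.castSucc)‖₊ :
        ℝ≥0∞) ^ q = (‖u - w‖₊ : ℝ≥0∞) ^ q := fun i => by
      rw [hval, hval, Fin.val_succ, Fin.val_castSucc]
      by_cases hi : Odd (i : ℕ)
      · simp [hi, Nat.odd_add_one, ← nnnorm_neg (w - u)]
      · simp [hi, Nat.odd_add_one]
    refine le_of_eq_of_le ?_ (le_pVar _ ht h0 hlast)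
    rw [Finset.sum_congr rfl fun i _ => hterm i]
    simp

end PVar

/-- A composition operator `C_f : BV_p([a,b],E) → BV_q([a,b],E)` with bounded range is
generated by a constant map `f`. -/
theorem comp_bounded_range_implies_constant {E : Type*} [NormedAddCommGroup E]
    (p q a b : ℝ) (hp : 1 ≤ p) (hpq : p ≤ q) (hab : a < b)
    (f : E → E)
    (hf : ∀ x : ℝ → E, pVar p a b x ≠ ⊤ → pVar q a b (fun t => f (x t)) ≠ ⊤)
    (hbdd : ∃ M : ℝ, ∀ x : ℝ → E, pVar p a b x ≠ ⊤ →
      ‖f (x a)‖ + (pVar q a b (fun t => f (x t))).toReal ^ (1 / q) ≤ M) :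
    ∀ u w : E, f u = f w := by
  intro u w
  obtain ⟨M, hM⟩ := hbdd
  have hq : 0 < q := by linarith
  have hbound : ∀ N : ℕ,
      N * (‖f u - f w‖₊ : ℝ≥0∞) ^ q ≤ ENNReal.ofReal ((M - ‖f w‖) ^ q) := by
    intro N
    obtain ⟨S, haS, hS⟩ := exists_spikeFun_natCast_mul_le_pVar q hab N (f u) (f w)
    have hx := pVar_spikeFun_ne_top (p := p) (by linarith) a b S u w
    have hMx := hM _ hx
    rw [comp_spikeFun, spikeFun_apply_of_notMem haS] at hMx
    have hfx := hf _ hx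
    rw [comp_spikeFun] at hfx
    exact hS.trans (ENNReal.le_ofReal_rpow_of_toReal_rpow_le hq hfx (by linarith))
  have := ENNReal.eq_zero_of_forall_natCast_mul_le ENNReal.ofReal_ne_top hbound
  simpa [hq, sub_eq_zero] using this
end

section
/- Let E be a normed space, u, w ∈ E, p ≥ 1, m ∈ ℕ, and let a < a₁ < a₂ < ... < a_m < b. Define x : [a,b] → E by x(t) = u if t = a_k for some k, and x(t) = w otherwise. Then var_p(x,[a,b]) ≤ 2m‖u-w‖^p. -/
open scoped ENNReal NNReal

/-!
A two-valued function has all its increments of norm at most `‖u - w‖`, and off the finite set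
`A = {a₁, …, a_m}` it is constant. So in a partition only the intervals with an endpoint in `A`
contribute, each at most `‖u - w‖^p`, and since the partition points are distinct every point
of `A` is the endpoint of at most two intervals.
-/

open Finset

lemma pVar_le_of_forall_strictMono {E : Type*} [NormedAddCommGroup E] {p a b : ℝ} {x : ℝ → E}
    {c : ℝ≥0∞}
    (h : ∀ (n : ℕ) (t : Fin (n + 1) → ℝ), StrictMono t →
      ∑ i : Fin n, (‖x (t i.succ) - x (t i.castSucc)‖₊ : ℝ≥0∞) ^ p ≤ c) :
    pVar p a b x ≤ c :=
  iSup_le fun n => iSup_le fun t => iSup_le fun ht => iSup_le fun _ => iSup_le fun _ => h n t ht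

lemma nnnorm_sub_le_of_forall_eq_or_eq {α E : Type*} [NormedAddCommGroup E] {x : α → E}
    {u w : E} (hx : ∀ s, x s = u ∨ x s = w) (s t : α) : ‖x s - x t‖₊ ≤ ‖u - w‖₊ := by
  rcases hx s with hs | hs <;> rcases hx t with ht | ht <;>
    simp only [hs, ht, sub_self, nnnorm_zero, zero_le, le_refl]
  rw [← nnnorm_neg, neg_sub]

lemma card_filter_succ_mem_or_castSucc_mem_le {α : Type*} [DecidableEq α] {n : ℕ}
    {t : Fin (n + 1) → α} (ht : Function.Injective t) (A : Finset α) :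
    #{i : Fin n | t i.succ ∈ A ∨ t i.castSucc ∈ A} ≤ 2 * #A := by
  have hcard (f : Fin n → Fin (n + 1)) (hf : Function.Injective f) :
      #{i : Fin n | t (f i) ∈ A} ≤ #A :=
    card_le_card_of_injOn (t ∘ f) (fun i hi => (mem_filter.1 hi).2)
      (ht.comp hf).injOn
  calc #{i : Fin n | t i.succ ∈ A ∨ t i.castSucc ∈ A}
      ≤ #{i : Fin n | t i.succ ∈ A} + #{i : Fin n | t i.castSucc ∈ A} := by
        rw [filter_or]; exact card_union_le _ _
    _ ≤ #A + #A :=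
        add_le_add (hcard _ (Fin.succ_injective n)) (hcard _ (Fin.castSucc_injective n))
    _ = 2 * #A := (two_mul _).symm

lemma pVar_le_of_const_off_finset {E : Type*} [NormedAddCommGroup E] {p : ℝ} (hp : 0 < p)
    (a b : ℝ) {x : ℝ → E} {C : ℝ≥0} (hC : ∀ s t, ‖x s - x t‖₊ ≤ C) (A : Finset ℝ)
    (hA : ∀ s t, s ∉ A → t ∉ A → x s = x t) :
    pVar p a b x ≤ 2 * #A * (C : ℝ≥0∞) ^ p := by
  classical
  refine pVar_le_of_forall_strictMono fun n t ht => ?_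
  have hterm (i : Fin n) : (‖x (t i.succ) - x (t i.castSucc)‖₊ : ℝ≥0∞) ^ p ≤
      if t i.succ ∈ A ∨ t i.castSucc ∈ A then (C : ℝ≥0∞) ^ p else 0 := by
    split_ifs with hi
    · gcongr; exact_mod_cast hC _ _
    · obtain ⟨hsucc, hcast⟩ := not_or.1 hi
      simp [hA _ _ hsucc hcast, ENNReal.zero_rpow_of_pos hp]
  calc ∑ i : Fin n, (‖x (t i.succ) - x (t i.castSucc)‖₊ : ℝ≥0∞) ^ p
      ≤ ∑ i : Fin n, if t i.succ ∈ A ∨ t i.castSucc ∈ A then (C : ℝ≥0∞) ^ p else 0 :=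
        sum_le_sum fun i _ => hterm i
    _ = #{i : Fin n | t i.succ ∈ A ∨ t i.castSucc ∈ A} * (C : ℝ≥0∞) ^ p := by
        rw [← sum_filter, sum_const, nsmul_eq_mul]
    _ ≤ 2 * #A * (C : ℝ≥0∞) ^ p := by
        gcongr
        exact_mod_cast card_filter_succ_mem_or_castSucc_mem_le ht.injective A

theorem pVar_two_valued_le_general {E : Type*} [NormedAddCommGroup E]
    (p a b : ℝ) (hp : 1 ≤ p) (u w : E) (m : ℕ)
    (pts : Fin m → ℝ)
    (x : ℝ → E) (hxdef : ∀ t : ℝ, x t = if ∃ k, t = pts k then u else w) :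
    pVar p a b x ≤ (2 * m : ℝ≥0∞) * (‖u - w‖₊ : ℝ≥0∞) ^ p := by
  classical
  set A : Finset ℝ := univ.image pts
  have hval : ∀ s, x s = u ∨ x s = w := fun s => by rw [hxdef]; split_ifs <;> simp
  have hoff : ∀ s ∉ A, x s = w := fun s hs => by
    rw [hxdef, if_neg]
    rintro ⟨k, rfl⟩
    exact hs (mem_image_of_mem pts (mem_univ k))
  have hcard : (#A : ℝ≥0∞) ≤ m :=
    mod_cast card_image_le.trans (card_univ.trans (Fintype.card_fin m)).le
  calc pVar p a b x ≤ 2 * #A * (‖u - w‖₊ : ℝ≥0∞) ^ p :=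
        pVar_le_of_const_off_finset (by linarith) a b (nnnorm_sub_le_of_forall_eq_or_eq hval) A
          fun s t hs ht => (hoff s hs).trans (hoff t ht).symm
    _ ≤ 2 * m * (‖u - w‖₊ : ℝ≥0∞) ^ p := by gcongr

/-- Let `a < a₁ < … < a_m < b` and let `x` equal `u` at the points `aₖ` and `w`
elsewhere. Then `var_p(x, [a,b]) ≤ 2 m ‖u - w‖^p`. -/
theorem pVar_two_valued_le {E : Type*} [NormedAddCommGroup E]
    (p a b : ℝ) (hp : 1 ≤ p) (u w : E) (m : ℕ)
    (pts : Fin m → ℝ) (hmono : StrictMono pts) (hin : ∀ k, a < pts k ∧ pts k < b)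
    (x : ℝ → E) (hxdef : ∀ t : ℝ, x t = if ∃ k, t = pts k then u else w) :
    pVar p a b x ≤ (2 * m : ℝ≥0∞) * (‖u - w‖₊ : ℝ≥0∞) ^ p :=
  pVar_two_valued_le_general p a b hp u w m pts x hxdef
end
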